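/- Let G be an ancestral graph and let X, Y be disjoint node sets. If Z and Z ∪ Zₙ are m-separators relative to (X,Y), where Zₙ = {Z₁, …, Zₙ} is a set of n nodes disjoint from Z ∪ X ∪ Y, then there exists a chain of subsets Z₁′ ⊂ Z₂′ ⊂ … ⊂ Zₙ₋₁′ ⊂ Zₙ with |Zᵢ′| = i for each i ∈ {1,…,n−1} such that every set Z ∪ Zᵢ′ is an m-separator relative to (X,Y). -/

import Mathlib

/-!
Common definitions: mixed graphs, walks, colliders, m-separation,
ancestral graphs, DAGs, MAGs, proper causal paths, adjustment criteria,
inducing paths, and MAG marginalization.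
-/

universe u

/-- The four possible kinds of edges of a mixed graph, oriented along the
direction of traversal: `u → v`, `u ← v`, `u ↔ v`, `u − v`. -/
inductive EType where
  | right : EType
  | left : EType
  | both : EType
  | undirEdge : EType
deriving DecidableEq

namespace EType

/-- The edge has an arrowhead at its first endpoint. -/
def headFst : EType → Prop
  | .left => True
  | .both => True
  | _ => False

/-- The edge has an arrowhead at its second endpoint. -/
def headSnd : EType → Prop
  | .right => True
  | .both => True
  | _ => False

end EType

/-- A mixed graph with directed, bidirected and undirected edges. -/
structure MixedGraph (V : Type u) where
  dir : V → V → Prop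
  bi : V → V → Prop
  undir : V → V → Prop
  bi_symm : ∀ u v, bi u v → bi v u
  undir_symm : ∀ u v, undir u v → undir v u

namespace MixedGraph

variable {V : Type u}

/-- `G.IsEdge e u v` holds if the graph contains the edge `e` from `u` to `v`
(read in the direction of traversal). -/
def IsEdge (G : MixedGraph V) : EType → V → V → Prop
  | .right, u, v => G.dir u v
  | .left, u, v => G.dir v u
  | .both, u, v => G.bi u v
  | .undirEdge, u, v => G.undir u v

/-- Walks in a mixed graph, remembering the type of every traversed edge. -/
inductive Walk (G : MixedGraph V) : V → V → Type u
  | nil (v : V) : Walk G v v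
  | cons (u v w : V) (e : EType) (h : G.IsEdge e u v) (p : Walk G v w) : Walk G u w

namespace Walk

variable {G : MixedGraph V}

/-- The list of nodes visited by a walk (with multiplicity). -/
def support : {a b : V} → G.Walk a b → List V
  | _, _, .nil v => [v]
  | _, _, .cons u _ _ _ _ p => u :: p.support

/-- A path is a walk without repeated nodes. -/
def IsPath {a b : V} (p : G.Walk a b) : Prop := p.support.Nodup

/-- Auxiliary m-connectivity check: `ph` records whether the previous edge of
the walk has an arrowhead at the current start node.  At every interior node,
the node must be a collider (two arrowheads meet) iff it belongs to `Z`. -/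
def connFrom (Z : Set V) : Prop → {a b : V} → G.Walk a b → Prop
  | _, _, _, .nil _ => True
  | ph, _, _, .cons u _ _ e _ p =>
      ((ph ∧ e.headFst) ↔ u ∈ Z) ∧ p.connFrom Z e.headSnd

/-- The walk m-connects its endpoints given `Z`: all colliders and only
colliders on it are in `Z`. -/
def ConnBy (Z : Set V) : {a b : V} → G.Walk a b → Prop
  | _, _, .nil _ => True
  | _, _, .cons _ _ _ e _ p => p.connFrom Z e.headSnd

/-- A causal (directed) walk: every edge points towards the end node. -/
def IsCausal : {a b : V} → G.Walk a b → Prop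
  | _, _, .nil _ => True
  | _, _, .cons _ _ _ e _ p => e = EType.right ∧ p.IsCausal

/-- A walk is proper w.r.t. `X` if only its start node may belong to `X`. -/
def ProperFrom (X : Set V) : {a b : V} → G.Walk a b → Prop
  | _, _, .nil _ => True
  | _, _, .cons _ _ _ _ _ p => ∀ n ∈ p.support, n ∉ X

/-- Concatenation of walks. -/
def append : {a b c : V} → G.Walk a b → G.Walk b c → G.Walk a c
  | _, _, _, .nil _, q => q
  | _, _, _, .cons u v _ e h p, q => .cons u v _ e h (p.append q)

/-- The walk is nonempty and its first edge has an arrowhead at the start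
node. -/
def headAtStart : {a b : V} → G.Walk a b → Prop
  | _, _, .nil _ => False
  | _, _, .cons _ _ _ e _ _ => e.headFst

/-- The walk is nonempty and its last edge has an arrowhead at the end node. -/
def headAtEnd : {a b : V} → G.Walk a b → Prop
  | _, _, .nil _ => False
  | _, _, .cons _ _ _ e _ (.nil _) => e.headSnd
  | _, _, .cons _ _ _ _ _ p => p.headAtEnd

/-- `P` holds of every (ordered) pair of consecutive nodes of the walk. -/
def edgeProp (P : V → V → Prop) : {a b : V} → G.Walk a b → Prop
  | _, _, .nil _ => True
  | _, _, .cons u v _ _ _ p => P u v ∧ p.edgeProp P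

end Walk

/-- `x` and `y` are m-connected given `Z`: there is a walk between them on
which all colliders and only colliders are in `Z`. -/
def MConn (G : MixedGraph V) (Z : Set V) (x y : V) : Prop :=
  ∃ p : G.Walk x y, p.ConnBy Z

/-- `Z` m-separates the node sets `X` and `Y`. -/
def MSep (G : MixedGraph V) (X Y Z : Set V) : Prop :=
  ∀ x ∈ X, ∀ y ∈ Y, ¬ G.MConn Z x y

/-- `Z` is an m-separator relative to `(X, Y)`: it is disjoint from `X ∪ Y`
and m-separates `X` and `Y`. -/
def IsMSep (G : MixedGraph V) (X Y Z : Set V) : Prop :=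
  Disjoint Z (X ∪ Y) ∧ G.MSep X Y Z

/-- An `M`-minimal m-separator relative to `(X, Y)`. -/
def IsMinMSep (G : MixedGraph V) (X Y M Z : Set V) : Prop :=
  G.IsMSep X Y Z ∧ M ⊆ Z ∧ ∀ Z', Z' ⊂ Z → M ⊆ Z' → ¬ G.IsMSep X Y Z'

/-- One step of the anterior relation: a directed or undirected edge. -/
def antEdge (G : MixedGraph V) (u v : V) : Prop := G.dir u v ∨ G.undir u v

/-- `u` is an anterior of `v` (every node is its own anterior). -/
def Anterior (G : MixedGraph V) (u v : V) : Prop :=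
  Relation.ReflTransGen G.antEdge u v

/-- The set of anteriors of nodes of `W`. -/
def Ant (G : MixedGraph V) (W : Set V) : Set V := {u | ∃ w ∈ W, G.Anterior u w}

/-- `v` is a descendant of `u`, i.e. there is a directed path `u → ⋯ → v`
(every node is its own descendant/ancestor). -/
def Anc (G : MixedGraph V) (u v : V) : Prop := Relation.ReflTransGen G.dir u v

/-- The set of descendants of nodes of `W`. -/
def De (G : MixedGraph V) (W : Set V) : Set V := {v | ∃ w ∈ W, G.Anc w v}

/-- The set of ancestors of nodes of `W`. -/
def AnSet (G : MixedGraph V) (W : Set V) : Set V := {v | ∃ w ∈ W, G.Anc v w}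

/-- An ancestral graph: (1) for each edge `a ← b` or `a ↔ b`, `a` is not an
anterior of `b`; (2) for each edge `a − b` there is no edge `a ← c`, `a ↔ c`,
`b ← c` or `b ↔ c`. -/
def IsAG (G : MixedGraph V) : Prop :=
  (∀ a b, G.dir b a ∨ G.bi a b → ¬ G.Anterior a b) ∧
  (∀ a b, G.undir a b →
    ∀ c, ¬ G.dir c a ∧ ¬ G.bi a c ∧ ¬ G.dir c b ∧ ¬ G.bi b c)

/-- A DAG: only directed edges, and no directed cycles. -/
def IsDAG (G : MixedGraph V) : Prop :=
  (∀ u v, ¬ G.bi u v) ∧ (∀ u v, ¬ G.undir u v) ∧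
  (∀ v, ¬ Relation.TransGen G.dir v v)

/-- Two nodes are adjacent if they are joined by some edge. -/
def Adjacent (G : MixedGraph V) (u v : V) : Prop :=
  G.dir u v ∨ G.dir v u ∨ G.bi u v ∨ G.undir u v

/-- A maximal ancestral graph (MAG): only directed and bidirected edges, no
directed cycle, no almost-directed cycle, and every pair of non-adjacent
nodes can be m-separated by some set of the remaining nodes. -/
def IsMAG (G : MixedGraph V) : Prop :=
  (∀ u v, ¬ G.undir u v) ∧
  (∀ v, ¬ Relation.TransGen G.dir v v) ∧
  (∀ u v, G.bi u v → ¬ Relation.TransGen G.dir v u) ∧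
  (∀ u v, u ≠ v → ¬ G.Adjacent u v →
    ∃ Z : Set V, u ∉ Z ∧ v ∉ Z ∧ ¬ G.MConn Z u v)

/-- `PCP G X Y`: the set of nodes, excluding nodes of `X`, that lie on a
proper causal path from `X` to `Y`. -/
def PCP (G : MixedGraph V) (X Y : Set V) : Set V :=
  {w | w ∉ X ∧ ∃ x ∈ X, ∃ y ∈ Y, ∃ p : G.Walk x y,
    p.IsPath ∧ p.IsCausal ∧ p.ProperFrom X ∧ w ∈ p.support}

/-- `Dpcp G X Y`: the descendants of nodes on proper causal paths. -/
def Dpcp (G : MixedGraph V) (X Y : Set V) : Set V := G.De (G.PCP X Y)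

/-- Remove from `G` all edges into `A` and all edges out of `B`. -/
def rmInOut (G : MixedGraph V) (A B : Set V) : MixedGraph V where
  dir u v := G.dir u v ∧ v ∉ A ∧ u ∉ B
  bi u v := G.bi u v ∧ u ∉ A ∧ v ∉ A
  undir u v := G.undir u v ∧ u ∉ B ∧ v ∉ B
  bi_symm := fun u v h => ⟨G.bi_symm u v h.1, h.2.2, h.2.1⟩
  undir_symm := fun u v h => ⟨G.undir_symm u v h.1, h.2.2, h.2.1⟩

/-- The parametrized proper back-door graph: remove every edge `x → d` with
`x ∈ X` and `d ∈ PCP(X,Y) ∪ C`. -/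
def pbdC (G : MixedGraph V) (X Y C : Set V) : MixedGraph V where
  dir u v := G.dir u v ∧ ¬(u ∈ X ∧ v ∈ G.PCP X Y ∪ C)
  bi := G.bi
  undir := G.undir
  bi_symm := G.bi_symm
  undir_symm := G.undir_symm

/-- The proper back-door graph. -/
def pbd (G : MixedGraph V) (X Y : Set V) : MixedGraph V := G.pbdC X Y ∅

/-- The adjustment criterion (AC) in a DAG: (a) no element of `Z` is a
descendant in `G_{X̄}` of a node outside `X` lying on a proper causal path
from `X` to `Y`; (b) every proper non-causal path from `X` to `Y` is blocked
by `Z`. -/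
def SatisfiesACdag (G : MixedGraph V) (X Y Z : Set V) : Prop :=
  (∀ z ∈ Z, z ∉ (G.rmInOut X ∅).De (G.PCP X Y)) ∧
  (∀ x ∈ X, ∀ y ∈ Y, ∀ p : G.Walk x y,
    p.IsPath → p.ProperFrom X → ¬ p.IsCausal → ¬ p.ConnBy Z)

/-- The adjustment criterion (AC) in a MAG: (a) no element of `Z` is a
descendant in `M` of a node outside `X` lying on a proper causal path from
`X` to `Y`; (b) every proper non-causal path from `X` to `Y` is blocked by
`Z`. -/
def SatisfiesACmag (G : MixedGraph V) (X Y Z : Set V) : Prop :=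
  (∀ z ∈ Z, z ∉ G.Dpcp X Y) ∧
  (∀ x ∈ X, ∀ y ∈ Y, ∀ p : G.Walk x y,
    p.IsPath → p.ProperFrom X → ¬ p.IsCausal → ¬ p.ConnBy Z)

/-- The constructive back-door criterion (CBC): (a) `Z` avoids
`Dpcp(X,Y)`; (b) `Z` m-separates `X` and `Y` in the proper back-door
graph. -/
def SatisfiesCBC (G : MixedGraph V) (X Y Z : Set V) : Prop :=
  (∀ z ∈ Z, z ∉ G.Dpcp X Y) ∧ (G.pbd X Y).MSep X Y Z

/-- The parametrized constructive back-door criterion CBC(A,B,C). -/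
def SatisfiesCBCP (G : MixedGraph V) (X Y Z A B C : Set V) : Prop :=
  (∀ z ∈ Z, z ∉ (G.rmInOut A B).De (G.PCP X Y)) ∧ (G.pbdC X Y C).MSep X Y Z

namespace Walk

variable {G : MixedGraph V}

/-- Auxiliary check for inducing paths: every interior non-collider is in
`L`, and every interior collider is an ancestor of a node of `T`.  `ph`
records whether the previous edge has an arrowhead at the current node. -/
def indFrom (L T : Set V) : Prop → {a b : V} → G.Walk a b → Prop
  | _, _, _, .nil _ => True
  | ph, _, _, .cons u _ _ e _ p =>
      ((ph ∧ e.headFst) → ∃ t ∈ T, Relation.ReflTransGen G.dir u t) ∧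
      (¬(ph ∧ e.headFst) → u ∈ L) ∧ p.indFrom L T e.headSnd

/-- Interior conditions for inducing paths (endpoints are exempt). -/
def indBody (L T : Set V) : {a b : V} → G.Walk a b → Prop
  | _, _, .nil _ => True
  | _, _, .cons _ _ _ e _ p => p.indFrom L T e.headSnd

end Walk

/-- `p` is an inducing path with respect to `Z` and `L`: a path on which
every non-collider other than the endpoints is in `L` and every collider is
an ancestor of the endpoints or of `Z`. -/
def IsInducing (G : MixedGraph V) (Z L : Set V) {a b : V} (p : G.Walk a b) : Prop :=
  p.IsPath ∧ p.indBody L ({a, b} ∪ Z)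

/-- Adjacency in the MAG `G[∅_L`: `u, v ∉ L` are adjacent iff they cannot be
d-separated in `G` by any set `W ⊆ V∖L` (not containing `u, v`). -/
def magAdj (G : MixedGraph V) (L : Set V) (u v : V) : Prop :=
  u ∉ L ∧ v ∉ L ∧ u ≠ v ∧
  ∀ W : Set V, Disjoint W L → u ∉ W → v ∉ W → (G.MConn W u v ∧ G.MConn W v u)

/-- The MAG `G[∅_L` obtained from the DAG `G` by marginalizing `L`: adjacent
`u, v` are joined by `u → v` if `u` is an ancestor of `v` in `G` and `v` is
not an ancestor of `u`, and by `u ↔ v` if neither is an ancestor of the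
other. -/
def mag (G : MixedGraph V) (L : Set V) : MixedGraph V where
  dir u v := G.magAdj L u v ∧ G.Anc u v ∧ ¬ G.Anc v u
  bi u v := G.magAdj L u v ∧ ¬ G.Anc u v ∧ ¬ G.Anc v u
  undir _ _ := False
  bi_symm := fun u v h =>
    ⟨⟨h.1.2.1, h.1.1, h.1.2.2.1.symm,
      fun W hW hv hu => ⟨(h.1.2.2.2 W hW hu hv).2, (h.1.2.2.2 W hW hu hv).1⟩⟩,
      h.2.2, h.2.1⟩
  undir_symm := fun _ _ h => h.elim

/-- An inducing `Z`-trail in the MAG `G[∅_L`: a path whose interior nodes are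
exactly the `Z`-nodes on it, each consecutive pair being linked in `G` by an
inducing path w.r.t. `∅, L` which has arrowheads at the interior nodes. -/
def IsInducingZTrail (G : MixedGraph V) (Z L : Set V) {a b : V}
    (p : (G.mag L).Walk a b) : Prop :=
  p.IsPath ∧ a ∉ Z ∧ b ∉ Z ∧
  (∀ v ∈ p.support, v ≠ a → v ≠ b → v ∈ Z) ∧
  p.edgeProp (fun u v => ∃ q : G.Walk u v, G.IsInducing ∅ L q ∧
    (u ∈ Z → q.headAtStart) ∧ (v ∈ Z → q.headAtEnd))

end MixedGraph

open MixedGraph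

variable {V : Type u}

/-!
Let `Z` and `Z ∪ S` both m-separate `X` from `Y` in an ancestral graph. It suffices to find one
`v ∈ S` such that `Z ∪ {v}` is again an m-separator: then recurse on `Z ∪ {v}` and `S ∖ {v}`
and read the chain off the order in which the nodes were added.

If some `v ∈ S` is an anterior of `X ∪ Y ∪ Z`, take it. A walk that is m-connecting given
`Z ∪ {v}` but not given `Z` has `v` as a collider, so `v` has an arrowhead and, the graph being
ancestral, its anterior path to `X ∪ Y ∪ Z` is directed; splicing that path in at `v` yields a
walk m-connecting given `Z`.

Otherwise take `v` minimal in `S` for the anterior preorder. A walk m-connecting given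
`Z ∪ {v}` has `v` as a collider and, not being m-connecting given `Z ∪ S`, has some `s ∈ S ∖ {v}`
as a non-collider. Following the walk from `s` along a tail shows that `s` is an anterior of
`Z ∪ {v}` or of an endpoint, hence of `v`; minimality makes `v` an anterior of `s`, and an
anterior cycle through a node with an arrowhead is impossible in an ancestral graph.
-/

theorem Finset.exists_forall_rel_imp_rel {α : Type*} (r : α → α → Prop) [IsPreorder α r]
    {S : Finset α} (hS : S.Nonempty) : ∃ v ∈ S, ∀ s ∈ S, r s v → r v s := by
  classical
  obtain ⟨v, hv, hmin⟩ := S.exists_min_image (fun v => (S.filter (r · v)).card) hS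
  refine ⟨v, hv, fun s hs hsv => by_contra fun hvs => (hmin s hs).not_gt (card_lt_card ?_)⟩
  refine ssubset_iff_of_subset (fun t ht => ?_) |>.mpr ⟨v, ?_, ?_⟩
  · simp only [mem_filter] at ht ⊢
    exact ⟨ht.1, _root_.trans ht.2 hsv⟩
  · simpa using ⟨hv, refl_of r v⟩
  · simpa using fun _ => hvs

theorem List.Nodup.card_toFinset_take {α : Type*} [DecidableEq α] {l : List α} (hl : l.Nodup)
    (i : ℕ) : (l.take i).toFinset.card = min i l.length := by
  rw [List.toFinset_card_of_nodup (hl.sublist (List.take_sublist i l)), List.length_take]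

theorem List.Nodup.toFinset_take_ssubset {α : Type*} [DecidableEq α] {l : List α} (hl : l.Nodup)
    {i j : ℕ} (hij : i < j) (hj : j ≤ l.length) : (l.take i).toFinset ⊂ (l.take j).toFinset := by
  refine Finset.ssubset_iff_subset_ne.mpr ⟨fun x => by simpa using
    (List.take_subset_take_left l hij.le ·), fun h => ?_⟩
  have := congrArg Finset.card h
  rw [hl.card_toFinset_take, hl.card_toFinset_take] at this
  omega

namespace EType

def reverse : EType → EType
  | .right => .left
  | .left => .right
  | .both => .both
  | .undirEdge => .undirEdge

@[simp] theorem headFst_reverse (e : EType) : e.reverse.headFst = e.headSnd := by cases e <;> rfl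

@[simp] theorem headSnd_reverse (e : EType) : e.reverse.headSnd = e.headFst := by cases e <;> rfl

end EType

namespace MixedGraph

variable {G : MixedGraph V} {X Y Z : Set V} {u v w : V}

theorem isEdge_reverse {e : EType} (h : G.IsEdge e u v) : G.IsEdge e.reverse v u := by
  cases e
  exacts [h, h, G.bi_symm _ _ h, G.undir_symm _ _ h]

theorem antEdge_of_isEdge {e : EType} (h : G.IsEdge e u v) (he : ¬ e.headFst) :
    G.antEdge u v := by
  cases e
  exacts [Or.inl h, absurd trivial he, absurd trivial he, Or.inr h]

theorem anterior_of_anc (h : G.Anc u v) : G.Anterior u v :=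
  Relation.ReflTransGen.mono (fun _ _ => Or.inl) u v h

def HasArrowhead (G : MixedGraph V) (v : V) : Prop := ∃ u, G.dir u v ∨ G.bi u v

/-- A nonempty walk from `u` to `w` on which an interior node is a collider iff it lies in `Z`;
`a` (resp. `b`) says whether the first (last) edge has an arrowhead at `u` (at `w`). Unlike
`Walk.ConnBy`, this description is symmetric under reversal and closed under concatenation. -/
inductive ConnWalk (G : MixedGraph V) (Z : Set V) : V → Prop → Prop → V → Prop
  | single {u v : V} {e : EType} : G.IsEdge e u v → ConnWalk G Z u e.headFst e.headSnd v
  | cons {u v w : V} {e : EType} {a b : Prop} : G.IsEdge e u v → ((e.headSnd ∧ a) ↔ v ∈ Z) →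
      ConnWalk G Z v a b w → ConnWalk G Z u e.headFst b w

namespace ConnWalk

variable {a b c d : Prop}

theorem append (t₁ : G.ConnWalk Z u a b v) (hv : (b ∧ c) ↔ v ∈ Z)
    (t₂ : G.ConnWalk Z v c d w) : G.ConnWalk Z u a d w := by
  induction t₁ with
  | single h => exact .cons h hv t₂
  | cons h hc _ ih => exact .cons h hc (ih hv t₂)

theorem reverse (t : G.ConnWalk Z u a b w) : G.ConnWalk Z w b a u := by
  induction t with
  | @single u v e h => simpa using single (Z := Z) (isEdge_reverse h)
  | @cons u v w e a b h hc _ ih =>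
      exact ih.append (by rwa [and_comm]) (by simpa using single (Z := Z) (isEdge_reverse h))

theorem hasArrowhead_end (t : G.ConnWalk Z u a b w) (hb : b) : G.HasArrowhead w := by
  induction t with
  | @single u v e h =>
      cases e
      exacts [⟨u, Or.inl h⟩, hb.elim, ⟨u, Or.inr h⟩, hb.elim]
  | cons _ _ _ ih => exact ih hb

theorem hasArrowhead_start (t : G.ConnWalk Z u a b w) (ha : a) : G.HasArrowhead u :=
  t.reverse.hasArrowhead_end ha

theorem exists_connFrom (t : G.ConnWalk Z u a b w) {ph : Prop} (hu : (ph ∧ a) ↔ u ∈ Z) :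
    ∃ p : G.Walk u w, p.connFrom Z ph := by
  induction t generalizing ph with
  | single h => exact ⟨.cons _ _ _ _ h (.nil _), hu, trivial⟩
  | cons h hc _ ih =>
      obtain ⟨p, hp⟩ := ih hc
      exact ⟨.cons _ _ _ _ h p, hu, hp⟩

theorem mConn (t : G.ConnWalk Z u a b w) : G.MConn Z u w := by
  cases t with
  | single h => exact ⟨.cons _ _ _ _ h (.nil _), trivial⟩
  | cons h hc t =>
      obtain ⟨p, hp⟩ := t.exists_connFrom hc
      exact ⟨.cons _ _ _ _ h p, hp⟩

/-- Compare the walk with the conditioning set `Z₂`: either it is m-connecting for `Z₂` too, or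
it splits at the first interior node `s` on which `Z₁` and `Z₂` disagree. -/
theorem split {Z₁ Z₂ : Set V} (t : G.ConnWalk Z₁ u a b w) :
    G.ConnWalk Z₂ u a b w ∨ ∃ s c d, ¬(s ∈ Z₁ ↔ s ∈ Z₂) ∧ ((c ∧ d) ↔ s ∈ Z₁) ∧
      G.ConnWalk Z₁ u a c s ∧ G.ConnWalk Z₂ u a c s ∧ G.ConnWalk Z₁ s d b w := by
  induction t with
  | single h => exact Or.inl (.single h)
  | @cons u m w e a' b h hc t ih =>
      by_cases hm : m ∈ Z₁ ↔ m ∈ Z₂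
      · rcases ih with t₂ | ⟨s, c, d, hs, hcd, pre₁, pre₂, suf⟩
        · exact Or.inl (.cons h (hc.trans hm) t₂)
        · exact Or.inr ⟨s, c, d, hs, hcd, .cons h hc pre₁, .cons h (hc.trans hm) pre₂, suf⟩
      · exact Or.inr ⟨m, _, a', hm, hc, .single h, .single h, t⟩

theorem insert_cases (t : G.ConnWalk (insert v Z) u a b w) :
    G.ConnWalk Z u a b w ∨
      ∃ c d, c ∧ d ∧ G.ConnWalk Z u a c v ∧ G.ConnWalk Z v d b w := by
  have eq_of_ne : ∀ s, ¬(s ∈ insert v Z ↔ s ∈ Z) → s = v := fun s hs => by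
    by_contra hsv
    simp [hsv] at hs
  rcases t.split (Z₂ := Z) with t' | ⟨s, c, d, hs, hcd, -, pre, suf⟩
  · exact Or.inl t'
  obtain rfl := eq_of_ne s hs
  obtain ⟨hc, hd⟩ := hcd.mpr (Set.mem_insert _ _)
  right
  rcases suf.reverse.split (Z₂ := Z) with t' | ⟨s', c', d', hs', hcd', -, pre', -⟩
  · exact ⟨c, d, hc, hd, pre, t'.reverse⟩
  obtain rfl := eq_of_ne s' hs'
  exact ⟨c, c', hc, (hcd'.mpr (Set.mem_insert _ _)).1, pre, pre'.reverse⟩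

end ConnWalk

theorem Walk.connFrom_cases (p : G.Walk u w) {ph : Prop} (hp : p.connFrom Z ph) :
    u = w ∨ ∃ a b, ((ph ∧ a) ↔ u ∈ Z) ∧ G.ConnWalk Z u a b w := by
  induction p generalizing ph with
  | nil => exact Or.inl rfl
  | cons u v w e h p ih =>
      obtain ⟨hc, hp⟩ := hp
      rcases ih hp with rfl | ⟨a, b, hc', t⟩
      exacts [Or.inr ⟨_, _, hc, .single h⟩, Or.inr ⟨_, b, hc, .cons h hc' t⟩]

theorem MConn.eq_or_connWalk (h : G.MConn Z u w) : u = w ∨ ∃ a b, G.ConnWalk Z u a b w := by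
  obtain ⟨_ | ⟨_, _, _, _, h, p⟩, hp⟩ := h
  · exact Or.inl rfl
  · rcases p.connFrom_cases hp with rfl | ⟨a, b, hc, t⟩
    exacts [Or.inr ⟨_, _, .single h⟩, Or.inr ⟨_, b, .cons h hc t⟩]

theorem MSep.disjoint (h : G.MSep X Y Z) : Disjoint X Y :=
  Set.disjoint_left.mpr fun x hX hY => h x hX x hY ⟨.nil x, trivial⟩

namespace IsAG

theorem not_hasArrowhead_of_undir (hAG : G.IsAG) (h : G.undir u v) : ¬ G.HasArrowhead v := by
  rintro ⟨z, hz | hz⟩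
  · exact (hAG.2 u v h z).2.2.1 hz
  · exact (hAG.2 u v h z).2.2.2 (G.bi_symm _ _ hz)

theorem anc_of_anterior (hAG : G.IsAG) (hv : G.HasArrowhead v) (h : G.Anterior v w) :
    G.Anc v w := by
  induction h using Relation.ReflTransGen.head_induction_on with
  | refl => exact .refl
  | head hstep _ ih =>
      rcases hstep with hd | hu
      · exact .head hd (ih ⟨_, Or.inl hd⟩)
      · exact absurd hv (hAG.not_hasArrowhead_of_undir (G.undir_symm _ _ hu))

theorem eq_of_anterior_of_anterior (hAG : G.IsAG) (hv : G.HasArrowhead v)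
    (hvw : G.Anterior v w) (hwv : G.Anterior w v) : v = w := by
  rcases (hAG.anc_of_anterior hv hvw).cases_head with rfl | ⟨m, hvm, hmw⟩
  · rfl
  · exact absurd ((anterior_of_anc hmw).trans hwv) (hAG.1 m v (Or.inl hvm))

/-- Leaving `u` along a tail, the walk stays on an anterior path until it meets `Z` or ends: a
non-collider entered through an arrowhead is left through a tail, and in an ancestral graph no
arrowhead meets an undirected edge. -/
theorem mem_ant_of_connWalk (hAG : G.IsAG) {a b : Prop} (t : G.ConnWalk Z u a b w) (ha : ¬a) :
    u ∈ G.Ant (insert w Z) := by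
  induction t with
  | @single u v e h => exact ⟨v, Set.mem_insert v Z, .single (antEdge_of_isEdge h ha)⟩
  | @cons u m w e a' b h hc t ih =>
      have hstep := antEdge_of_isEdge h ha
      by_cases hm : m ∈ Z
      · exact ⟨m, Set.mem_insert_of_mem w hm, .single hstep⟩
      have ha' : ¬a' := fun ha' => by
        cases e with
        | right => exact hm (hc.mp ⟨trivial, ha'⟩)
        | left | both => exact ha trivial
        | undirEdge => exact hAG.not_hasArrowhead_of_undir h (t.hasArrowhead_start ha')
      obtain ⟨t₀, ht₀, hmt₀⟩ := ih ha'
      exact ⟨t₀, ht₀, .head hstep hmt₀⟩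

end IsAG

theorem exists_connWalk_of_anc {B : Set V} (hv : v ∉ B) (hZB : Z ⊆ B) (h : G.Anc v w)
    (hw : w ∈ B) : ∃ t ∈ B, G.ConnWalk Z v False True t := by
  induction h using Relation.ReflTransGen.head_induction_on with
  | refl => exact absurd hw hv
  | @head v m hvm _ ih =>
      by_cases hm : m ∈ B
      · exact ⟨m, hm, .single (e := .right) hvm⟩
      · obtain ⟨t, ht, hmt⟩ := ih hm
        exact ⟨t, ht, .cons (e := .right) hvm (iff_of_false (·.2) (hm <| hZB ·)) hmt⟩

theorem MSep.insert_of_mem_ant (hAG : G.IsAG) (hZ : G.MSep X Y Z)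
    (hv : v ∈ G.Ant (X ∪ Y ∪ Z)) : G.MSep X Y (insert v Z) := by
  by_cases hvZ : v ∈ Z
  · rwa [Set.insert_eq_of_mem hvZ]
  intro x hx y hy hconn
  rcases hconn.eq_or_connWalk with rfl | ⟨a, b, t⟩
  · exact hZ.disjoint.ne_of_mem hx hy rfl
  rcases t.insert_cases with t | ⟨c, d, hc, -, pre, suf⟩
  · exact hZ x hx y hy t.mConn
  rcases em (v ∈ X ∪ Y) with (hvX | hvY) | hvXY
  · exact hZ v hvX y hy suf.mConn
  · exact hZ x hx v hvY pre.mConn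
  obtain ⟨w, hw, hvw⟩ := hv
  have hvB : v ∉ X ∪ Y ∪ Z := by rintro (h | h) <;> contradiction
  obtain ⟨t, ht, down⟩ := exists_connWalk_of_anc hvB Set.subset_union_right
    (hAG.anc_of_anterior (pre.hasArrowhead_end hc) hvw) hw
  have to_t := pre.append (iff_of_false (·.2) hvZ) down
  have from_t := down.reverse.append (iff_of_false (·.1) hvZ) suf
  rcases ht with (htX | htY) | htZ
  · exact hZ t htX y hy from_t.mConn
  · exact hZ x hx t htY to_t.mConn
  · exact hZ x hx y hy (to_t.append (iff_of_true ⟨trivial, trivial⟩ htZ) from_t).mConn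

theorem MSep.insert_of_minimal (hAG : G.IsAG) (hZ : G.MSep X Y Z) {S : Set V}
    (hZS : G.MSep X Y (Z ∪ S)) (hS : ∀ s ∈ S, s ∉ G.Ant (X ∪ Y ∪ Z)) (hv : v ∈ S)
    (hmin : ∀ s ∈ S, G.Anterior s v → G.Anterior v s) : G.MSep X Y (insert v Z) := by
  intro x hx y hy hconn
  rcases hconn.eq_or_connWalk with rfl | ⟨a, b, t⟩
  · exact hZ.disjoint.ne_of_mem hx hy rfl
  rcases t.insert_cases with t' | ⟨c, -, hc, -, pre, -⟩
  · exact hZ x hx y hy t'.mConn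
  rcases t.split (Z₂ := Z ∪ S) with t' | ⟨s, c', d', hs, hcd, pre', -, suf'⟩
  · exact hZS x hx y hy t'.mConn
  have hvZS : insert v Z ⊆ Z ∪ S := Set.insert_subset (Or.inr hv) Set.subset_union_left
  have hsvZ : s ∉ insert v Z := fun h => hs (iff_of_true h (hvZS h))
  have hsZS : s ∈ Z ∪ S := by_contra fun h => hs (iff_of_false hsvZ h)
  have hsS : s ∈ S := hsZS.resolve_left (hsvZ ∘ Set.mem_insert_of_mem v)
  have hsv : G.Anterior s v := by
    have of_ant : ∀ e ∈ X ∪ Y, s ∈ G.Ant (insert e (insert v Z)) → G.Anterior s v := by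
      rintro e he ⟨r, rfl | rfl | hr, hsr⟩
      · exact absurd ⟨r, Or.inl he, hsr⟩ (hS s hsS)
      · exact hsr
      · exact absurd ⟨r, Or.inr hr, hsr⟩ (hS s hsS)
    rcases not_and_or.mp (mt hcd.mp hsvZ) with hc' | hd'
    · exact of_ant x (Or.inl hx) (hAG.mem_ant_of_connWalk pre'.reverse hc')
    · exact of_ant y (Or.inr hy) (hAG.mem_ant_of_connWalk suf' hd')
  have hvs := hAG.eq_of_anterior_of_anterior (pre.hasArrowhead_end hc) (hmin s hsS hsv) hsv
  exact hsvZ (hvs ▸ Set.mem_insert v Z)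

theorem MSep.exists_insert (hAG : G.IsAG) (hZ : G.MSep X Y Z) {S : Finset V} (hS : S.Nonempty)
    (hZS : G.MSep X Y (Z ∪ S)) : ∃ v ∈ S, G.MSep X Y (insert v Z) := by
  by_cases hant : ∃ s ∈ S, s ∈ G.Ant (X ∪ Y ∪ Z)
  · obtain ⟨s, hs, hsant⟩ := hant
    exact ⟨s, hs, hZ.insert_of_mem_ant hAG hsant⟩
  · push Not at hant
    obtain ⟨v, hv, hmin⟩ := S.exists_forall_rel_imp_rel (Relation.ReflTransGen G.antEdge) hS
    exact ⟨v, hv, hZ.insert_of_minimal hAG hZS hant hv hmin⟩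

theorem MSep.exists_list_msep_take [DecidableEq V] (hAG : G.IsAG) (hZ : G.MSep X Y Z) (S : Finset V)
    (hZS : G.MSep X Y (Z ∪ S)) :
    ∃ l : List V, l.Nodup ∧ l.toFinset = S ∧ ∀ k, G.MSep X Y (Z ∪ (l.take k).toFinset) := by
  induction S using Finset.strongInduction generalizing Z with
  | H S ih =>
    rcases S.eq_empty_or_nonempty with rfl | hS
    · exact ⟨[], List.nodup_nil, rfl, fun k => by simpa using hZ⟩
    obtain ⟨v, hv, hZv⟩ := hZ.exists_insert hAG hS hZS
    have hunion : insert v Z ∪ ↑(S.erase v) = Z ∪ S := by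
      ext x
      by_cases hx : x = v <;> simp [hx, hv]
    obtain ⟨l, hl, hlS, hsep⟩ := ih (S.erase v) (Finset.erase_ssubset hv) hZv (hunion ▸ hZS)
    refine ⟨v :: l, List.nodup_cons.mpr ⟨by simp [← List.mem_toFinset, hlS], hl⟩,
      by rw [List.toFinset_cons, hlS, Finset.insert_erase hv], ?_⟩
    rintro (_ | k)
    · simpa using hZ
    · simpa [Set.union_insert, Set.insert_union] using hsep k

end MixedGraph

theorem statement_4_general (G : MixedGraph V) (hAG : G.IsAG)
    (X Y Z : Set V)
    (S : Finset V) (n : ℕ) (hcard : S.card = n)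
    (hS : Disjoint (↑S : Set V) (Z ∪ X ∪ Y))
    (hZ : G.IsMSep X Y Z) (hZS : G.IsMSep X Y (Z ∪ ↑S)) :
    ∃ c : ℕ → Finset V,
      (∀ i, 1 ≤ i → i ≤ n - 1 →
        (c i).card = i ∧ c i ⊂ S ∧ G.IsMSep X Y (Z ∪ ↑(c i))) ∧
      (∀ i, 1 ≤ i → i + 1 ≤ n - 1 → c i ⊂ c (i + 1)) := by
  classical
  obtain ⟨l, hl, rfl, hsep⟩ := hZ.2.exists_list_msep_take hAG _ hZS.2
  have hlen : l.length = n := by rw [← hcard, List.toFinset_card_of_nodup hl]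
  have hssub (i : ℕ) (hi : i < n) : (l.take i).toFinset ⊂ l.toFinset := by
    simpa using hl.toFinset_take_ssubset (j := l.length) (by omega) le_rfl
  refine ⟨fun i => (l.take i).toFinset, fun i _ hi => ⟨?_, hssub i (by omega), ?_, hsep i⟩,
    fun i _ hi => hl.toFinset_take_ssubset (Nat.lt_succ_self i) (by omega)⟩
  · rw [hl.card_toFinset_take]
    omega
  · refine Set.disjoint_union_left.mpr ⟨hZ.1, ?_⟩
    refine (hS.mono_left (Finset.coe_subset.mpr (hssub i (by omega)).subset)).mono_right ?_
    rw [Set.union_assoc]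
    exact Set.subset_union_right

theorem statement_4 (G : MixedGraph V) (hAG : G.IsAG)
    (X Y Z : Set V) (hXY : Disjoint X Y)
    (S : Finset V) (n : ℕ) (hcard : S.card = n)
    (hS : Disjoint (↑S : Set V) (Z ∪ X ∪ Y))
    (hZ : G.IsMSep X Y Z) (hZS : G.IsMSep X Y (Z ∪ ↑S)) :
    ∃ c : ℕ → Finset V,
      (∀ i, 1 ≤ i → i ≤ n - 1 →
        (c i).card = i ∧ c i ⊂ S ∧ G.IsMSep X Y (Z ∪ ↑(c i))) ∧
      (∀ i, 1 ≤ i → i + 1 ≤ n - 1 → c i ⊂ c (i + 1)) :=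
  statement_4_general G hAG X Y Z S n hcard hS hZ hZS
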